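/- Let s ∈ (1/4,1) and set 2^♯ = 2(3s+1)/(s+1). Let f : ℝ → ℝ satisfy (H0) f is continuous; (H1) lim_{t→0} f(t)/|t|^{2^♯-1} = 0; (H3) lim_{|t|→∞} F(t)/|t|^{2^♯} = +∞; and (H4) t ↦ F̃(t)/|t|^{2^♯} is strictly decreasing on (-∞,0) and strictly increasing on (0,∞), where F(t) = ∫₀^t f(τ)dτ and F̃(t) = f(t)t - 2F(t). Then f(t)t > 2^♯ F(t) > 0 for all t ≠ 0. -/

import Mathlib

/-!
After the reflection `f ↦ -f(-·)` it suffices to treat `t > 0`. Put `p = 2^♯ > 2` and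
`G(u) = F̃(u)/u^p`. By (H1) and L'Hôpital's rule, `F(u)/u^p → 0` and hence `G(u) → 0` as
`u → 0⁺`, so the strictly increasing `G` is positive on `(0, ∞)`. Since
`(F(u)/u²)' = F̃(u)/u³ = G(u) u^(p-3)`, the function `F(u)/u²` increases from `0`, whence `F > 0`,
and so does `G(t) u^(p-2)/(p-2) - F(u)/u²` on `(0, t]`; at `u = t` this says
`(p - 2) F(t) < F̃(t)`, i.e. `p F(t) < f(t) t`.
-/

open MeasureTheory Filter
open scoped Topology

noncomputable section

/-- `F(t) = ∫₀ᵗ f(τ) dτ`. -/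
def Fint (f : ℝ → ℝ) (t : ℝ) : ℝ := ∫ τ in (0 : ℝ)..t, f τ

/-- `F̃(t) = f(t)t - 2F(t)`. -/
def Ftil (f : ℝ → ℝ) (t : ℝ) : ℝ := f t * t - 2 * Fint f t

/-- The mass critical exponent `2^♯ = 2(3s+1)/(s+1)`. -/
def twoSharp (s : ℝ) : ℝ := 2 * (3 * s + 1) / (s + 1)

open Set

lemma two_lt_twoSharp {s : ℝ} (hs : 0 < s) : 2 < twoSharp s := by
  rw [twoSharp, lt_div_iff₀ (by linarith)]
  linarith

lemma StrictMonoOn.lt_of_tendsto_nhdsGT {g : ℝ → ℝ} {a b l : ℝ} (hg : StrictMonoOn g (Ioc a b))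
    (hab : a < b) (hlim : Tendsto g (𝓝[>] a) (𝓝 l)) : l < g b := by
  have hm : (a + b) / 2 ∈ Ioc a b := ⟨by linarith, by linarith⟩
  have hlm : l ≤ g ((a + b) / 2) := le_of_tendsto hlim <| by
    filter_upwards [Ioo_mem_nhdsGT hm.1] with x hx
    exact (hg ⟨hx.1, hx.2.le.trans hm.2⟩ hm hx.2).le
  exact hlm.trans_lt (hg hm (right_mem_Ioc.2 hab) (by linarith))

lemma lt_of_tendsto_nhdsGT_of_hasDerivAt_pos {g g' : ℝ → ℝ} {a b l : ℝ} (hab : a < b)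
    (hg : ∀ x ∈ Ioc a b, HasDerivAt g (g' x) x) (hg' : ∀ x ∈ Ioo a b, 0 < g' x)
    (hlim : Tendsto g (𝓝[>] a) (𝓝 l)) : l < g b := by
  refine StrictMonoOn.lt_of_tendsto_nhdsGT ?_ hab hlim
  refine strictMonoOn_of_hasDerivWithinAt_pos (f' := g') (convex_Ioc a b)
    (fun x hx => (hg x hx).continuousAt.continuousWithinAt) (fun x hx => ?_) (fun x hx => ?_)
  · rw [interior_Ioc] at hx ⊢
    exact (hg x (Ioo_subset_Ioc_self hx)).hasDerivWithinAt
  · exact hg' x (by rwa [interior_Ioc] at hx)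

lemma tendsto_rpow_nhdsGT_zero {q : ℝ} (hq : 0 < q) :
    Tendsto (fun u : ℝ => u ^ q) (𝓝[>] 0) (𝓝 0) := by
  simpa [Real.zero_rpow hq.ne'] using
    (Real.continuousAt_rpow_const 0 q (Or.inr hq.le)).tendsto.mono_left nhdsWithin_le_nhds

section

variable {f : ℝ → ℝ}

lemma hasDerivAt_Fint (hf : Continuous f) (u : ℝ) : HasDerivAt (Fint f) (f u) u :=
  (hf.integral_hasStrictDerivAt 0 u).hasDerivAt

lemma Fint_neg_comp (t : ℝ) : Fint (fun u => -f (-u)) t = Fint f (-t) := by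
  rw [Fint, intervalIntegral.integral_neg, intervalIntegral.integral_comp_neg, neg_zero,
    intervalIntegral.integral_symm, neg_neg, Fint]

lemma Ftil_neg_comp (t : ℝ) : Ftil (fun u => -f (-u)) t = Ftil f (-t) := by
  simp only [Ftil, Fint_neg_comp]
  ring

lemma hasDerivAt_Fint_div_sq (hf : Continuous f) {u : ℝ} (hu : u ≠ 0) :
    HasDerivAt (fun v => Fint f v / v ^ 2) (Ftil f u / u ^ 3) u := by
  refine ((hasDerivAt_Fint hf u).div (hasDerivAt_pow 2 u) (pow_ne_zero 2 hu)).congr_deriv ?_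
  rw [Ftil]
  field_simp
  ring

lemma tendsto_Fint_div_rpow (hf : Continuous f) {p : ℝ} (hp : 0 < p)
    (h1 : Tendsto (fun u => f u / u ^ (p - 1)) (𝓝[>] 0) (𝓝 0)) :
    Tendsto (fun u => Fint f u / u ^ p) (𝓝[>] 0) (𝓝 0) := by
  refine HasDerivAt.lhopital_zero_nhdsGT (f' := f) (g' := fun u => p * u ^ (p - 1))
    (.of_forall (hasDerivAt_Fint hf)) ?_ ?_ ?_ (tendsto_rpow_nhdsGT_zero hp) ?_
  · filter_upwards [self_mem_nhdsWithin] with u (hu : 0 < u)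
    exact Real.hasDerivAt_rpow_const (Or.inl hu.ne')
  · filter_upwards [self_mem_nhdsWithin] with u (hu : 0 < u)
    positivity
  · simpa [Fint] using (hasDerivAt_Fint hf 0).continuousAt.tendsto.mono_left nhdsWithin_le_nhds
  · simpa [div_mul_eq_div_div_swap] using h1.div_const p

lemma tendsto_Ftil_div_rpow (hf : Continuous f) {p : ℝ} (hp : 0 < p)
    (h1 : Tendsto (fun u => f u / u ^ (p - 1)) (𝓝[>] 0) (𝓝 0)) :
    Tendsto (fun u => Ftil f u / u ^ p) (𝓝[>] 0) (𝓝 0) := by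
  have hF := tendsto_Fint_div_rpow hf hp h1
  have := h1.sub (hF.const_mul 2)
  rw [mul_zero, sub_zero] at this
  refine this.congr' ?_
  filter_upwards [self_mem_nhdsWithin] with u (hu : 0 < u)
  rw [Real.rpow_sub_one hu.ne', Ftil]
  field_simp

lemma tendsto_Fint_div_sq (hf : Continuous f) {p : ℝ} (hp : 2 < p)
    (h1 : Tendsto (fun u => f u / u ^ (p - 1)) (𝓝[>] 0) (𝓝 0)) :
    Tendsto (fun u => Fint f u / u ^ 2) (𝓝[>] 0) (𝓝 0) := by
  have := (tendsto_Fint_div_rpow hf (by linarith) h1).mul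
    (tendsto_rpow_nhdsGT_zero (sub_pos.2 hp))
  rw [mul_zero] at this
  refine this.congr' ?_
  filter_upwards [self_mem_nhdsWithin] with u (hu : 0 < u)
  rw [Real.rpow_sub hu, Real.rpow_two]
  have := Real.rpow_pos_of_pos hu p
  field_simp

lemma Ftil_pos (hf : Continuous f) {p : ℝ} (hp : 0 < p)
    (h1 : Tendsto (fun u => f u / u ^ (p - 1)) (𝓝[>] 0) (𝓝 0))
    (h4 : StrictMonoOn (fun u => Ftil f u / u ^ p) (Ioi 0)) {t : ℝ} (ht : 0 < t) :
    0 < Ftil f t :=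
  (div_pos_iff_of_pos_right (Real.rpow_pos_of_pos ht p)).1 <|
    (h4.mono Ioc_subset_Ioi_self).lt_of_tendsto_nhdsGT ht (tendsto_Ftil_div_rpow hf hp h1)

lemma Fint_pos (hf : Continuous f) {p : ℝ} (hp : 2 < p)
    (h1 : Tendsto (fun u => f u / u ^ (p - 1)) (𝓝[>] 0) (𝓝 0))
    (h4 : StrictMonoOn (fun u => Ftil f u / u ^ p) (Ioi 0)) {t : ℝ} (ht : 0 < t) :
    0 < Fint f t := by
  have hFtil_div_pos : ∀ u ∈ Ioo 0 t, 0 < Ftil f u / u ^ 3 := fun u hu =>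
    div_pos (Ftil_pos hf (by linarith) h1 h4 hu.1) (pow_pos hu.1 3)
  have := lt_of_tendsto_nhdsGT_of_hasDerivAt_pos ht
    (fun u hu => hasDerivAt_Fint_div_sq hf hu.1.ne') hFtil_div_pos (tendsto_Fint_div_sq hf hp h1)
  exact (div_pos_iff_of_pos_right (pow_pos ht 2)).1 this

lemma sub_two_mul_Fint_lt_Ftil (hf : Continuous f) {p : ℝ} (hp : 2 < p)
    (h1 : Tendsto (fun u => f u / u ^ (p - 1)) (𝓝[>] 0) (𝓝 0))
    (h4 : StrictMonoOn (fun u => Ftil f u / u ^ p) (Ioi 0)) {t : ℝ} (ht : 0 < t) :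
    (p - 2) * Fint f t < Ftil f t := by
  set G := fun u => Ftil f u / u ^ p
  have hp2 : 0 < p - 2 := sub_pos.2 hp
  have hFtil_div_cube : ∀ u, 0 < u → Ftil f u / u ^ 3 = G u * u ^ (p - 3) := fun u hu => by
    rw [Real.rpow_sub hu, Real.rpow_ofNat]
    have := Real.rpow_pos_of_pos hu p
    simp only [G]
    field_simp
  have hderiv : ∀ u ∈ Ioc 0 t, HasDerivAt (fun v => G t * v ^ (p - 2) / (p - 2) - Fint f v / v ^ 2)
      ((G t - G u) * u ^ (p - 3)) u := fun u hu => by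
    refine ((((Real.hasDerivAt_rpow_const (Or.inl hu.1.ne')).const_mul (G t)).div_const
      (p - 2)).sub (hasDerivAt_Fint_div_sq hf hu.1.ne')).congr_deriv ?_
    rw [hFtil_div_cube u hu.1, show p - 2 - 1 = p - 3 by ring]
    field_simp
  have hlim : Tendsto (fun v => G t * v ^ (p - 2) / (p - 2) - Fint f v / v ^ 2) (𝓝[>] 0) (𝓝 0) := by
    simpa using (((tendsto_rpow_nhdsGT_zero hp2).const_mul (G t)).div_const (p - 2)).sub
      (tendsto_Fint_div_sq hf hp h1)
  have key := lt_of_tendsto_nhdsGT_of_hasDerivAt_pos ht hderiv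
    (fun u hu => mul_pos (sub_pos.2 (h4 hu.1 ht hu.2)) (Real.rpow_pos_of_pos hu.1 _)) hlim
  rw [sub_pos, Real.rpow_sub ht, Real.rpow_two] at key
  have := Real.rpow_pos_of_pos ht p
  simp only [G] at key
  field_simp at key
  linarith

theorem superlinear_of_pos (hf : Continuous f) {p : ℝ} (hp : 2 < p)
    (h1 : Tendsto (fun u => f u / |u| ^ (p - 1)) (𝓝[>] 0) (𝓝 0))
    (h4 : StrictMonoOn (fun u => Ftil f u / |u| ^ p) (Ioi 0)) {t : ℝ} (ht : 0 < t) :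
    p * Fint f t < f t * t ∧ 0 < Fint f t := by
  have h1' : Tendsto (fun u => f u / u ^ (p - 1)) (𝓝[>] 0) (𝓝 0) := h1.congr' <| by
    filter_upwards [self_mem_nhdsWithin] with u (hu : 0 < u)
    rw [abs_of_pos hu]
  have h4' : StrictMonoOn (fun u => Ftil f u / u ^ p) (Ioi 0) :=
    h4.congr fun u (hu : 0 < u) => by simp only [abs_of_pos hu]
  have h := sub_two_mul_Fint_lt_Ftil hf hp h1' h4' ht
  rw [Ftil] at h
  exact ⟨by linarith, Fint_pos hf hp h1' h4' ht⟩

lemma tendsto_neg_comp_div_abs_rpow {q : ℝ}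
    (h : Tendsto (fun u => f u / |u| ^ q) (𝓝[≠] 0) (𝓝 0)) :
    Tendsto (fun u => -f (-u) / |u| ^ q) (𝓝[>] 0) (𝓝 0) := by
  have hneg : Tendsto (fun u : ℝ => -u) (𝓝[>] 0) (𝓝[≠] 0) := by
    simpa using (tendsto_neg_nhdsGT_neg (a := (0 : ℝ))).mono_right (nhdsLT_le_nhdsNE 0)
  simpa [neg_div] using (h.comp hneg).neg

lemma strictMonoOn_Ftil_neg_comp {p : ℝ}
    (h : StrictAntiOn (fun u => Ftil f u / |u| ^ p) (Iio 0)) :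
    StrictMonoOn (fun u => Ftil (fun v => -f (-v)) u / |u| ^ p) (Ioi 0) := fun u hu v hv huv => by
  simpa only [Ftil_neg_comp, abs_neg] using
    h (mem_Iio.2 (neg_neg_iff_pos.2 hv)) (mem_Iio.2 (neg_neg_iff_pos.2 hu)) (neg_lt_neg huv)

end

theorem nonlinearity_superlinear_general (s : ℝ) (hs : s ∈ Set.Ioo (1 / 4 : ℝ) 1) (f : ℝ → ℝ)
    (hH0 : Continuous f)
    (hH1 : Tendsto (fun t => f t / |t| ^ (twoSharp s - 1)) (𝓝[≠] (0 : ℝ)) (𝓝 0))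
    (hH4a : StrictAntiOn (fun t => Ftil f t / |t| ^ twoSharp s) (Set.Iio (0 : ℝ)))
    (hH4b : StrictMonoOn (fun t => Ftil f t / |t| ^ twoSharp s) (Set.Ioi (0 : ℝ))) :
    ∀ t : ℝ, t ≠ 0 → twoSharp s * Fint f t < f t * t ∧ 0 < Fint f t := by
  have hp : 2 < twoSharp s := two_lt_twoSharp (by linarith [hs.1])
  intro t ht
  rcases ht.lt_or_gt with ht | ht
  · have hg : Continuous fun u => -f (-u) := by fun_prop
    have h := superlinear_of_pos hg hp (tendsto_neg_comp_div_abs_rpow hH1)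
      (strictMonoOn_Ftil_neg_comp hH4a) (neg_pos.2 ht)
    simpa only [Fint_neg_comp, neg_neg, neg_mul_neg] using h
  · exact superlinear_of_pos hH0 hp (hH1.mono_left (nhdsGT_le_nhdsNE 0)) hH4b ht

/-- **Superlinearity of the nonlinearity.**  If `f` is continuous (H0), satisfies (H1)
`f(t)/|t|^{2♯-1} → 0` as `t → 0`, (H3) `F(t)/|t|^{2♯} → +∞` as `|t| → ∞`, and (H4)
`t ↦ F̃(t)/|t|^{2♯}` is strictly decreasing on `(-∞,0)` and strictly increasing on `(0,∞)`,
then `f(t)t > 2♯ F(t) > 0` for all `t ≠ 0`. -/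
theorem nonlinearity_superlinear (s : ℝ) (hs : s ∈ Set.Ioo (1 / 4 : ℝ) 1) (f : ℝ → ℝ)
    (hH0 : Continuous f)
    (hH1 : Tendsto (fun t => f t / |t| ^ (twoSharp s - 1)) (𝓝[≠] (0 : ℝ)) (𝓝 0))
    (hH3 : Tendsto (fun t => Fint f t / |t| ^ twoSharp s) (cocompact ℝ) atTop)
    (hH4a : StrictAntiOn (fun t => Ftil f t / |t| ^ twoSharp s) (Set.Iio (0 : ℝ)))
    (hH4b : StrictMonoOn (fun t => Ftil f t / |t| ^ twoSharp s) (Set.Ioi (0 : ℝ))) :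
    ∀ t : ℝ, t ≠ 0 → twoSharp s * Fint f t < f t * t ∧ 0 < Fint f t :=
  nonlinearity_superlinear_general s hs f hH0 hH1 hH4a hH4b

end
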